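/- arXiv:1509.07204 — 7 statements merged into one kernel-verified Lean document; each statement's English description precedes it below -/
import Mathlib

section
/- Forward image closure of team bisimulation: if K,T [⇄_{k+1}] K',T', then for every team S of K with T[R]S there exists a team S' of K' with T'[R']S' and K,S [⇄_k] K',S'. -/
namespace TeamSem

structure KripkeModel (Φ : Type) where
  W : Type
  R : W → W → Prop
  V : Φ → Set W

variable {Φ : Type}

/-- Image `R[T]` of a team under the accessibility relation. -/
def img (K : KripkeModel Φ) (T : Set K.W) : Set K.W := {v | ∃ w ∈ T, K.R w v}

/-- Preimage `R⁻¹[S]`. -/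
def preimg (K : KripkeModel Φ) (S : Set K.W) : Set K.W := {w | ∃ v ∈ S, K.R w v}

/-- `T[R]S` : `S ⊆ R[T]` and `T ⊆ R⁻¹[S]`. -/
def relStep (K : KripkeModel Φ) (T S : Set K.W) : Prop :=
  S ⊆ img K T ∧ T ⊆ preimg K S

/-- ML formulas in negation normal form. -/
inductive MLFormula (Φ : Type) where
  | atom : Φ → MLFormula Φ
  | natom : Φ → MLFormula Φ
  | and : MLFormula Φ → MLFormula Φ → MLFormula Φ
  | or : MLFormula Φ → MLFormula Φ → MLFormula Φ
  | dia : MLFormula Φ → MLFormula Φ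
  | box : MLFormula Φ → MLFormula Φ

/-- Lax team semantics for ML. -/
def mlSat (K : KripkeModel Φ) : MLFormula Φ → Set K.W → Prop
  | .atom p, T => T ⊆ K.V p
  | .natom p, T => T ∩ K.V p = ∅
  | .and φ ψ, T => mlSat K φ T ∧ mlSat K ψ T
  | .or φ ψ, T => ∃ T₁ T₂, T = T₁ ∪ T₂ ∧ mlSat K φ T₁ ∧ mlSat K ψ T₂
  | .dia φ, T => ∃ S, relStep K T S ∧ mlSat K φ S
  | .box φ, T => mlSat K φ (img K T)

/-- Standard single-world Kripke semantics for ML. -/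
def mlSatW (K : KripkeModel Φ) : MLFormula Φ → K.W → Prop
  | .atom p, w => w ∈ K.V p
  | .natom p, w => w ∉ K.V p
  | .and φ ψ, w => mlSatW K φ w ∧ mlSatW K ψ w
  | .or φ ψ, w => mlSatW K φ w ∨ mlSatW K ψ w
  | .dia φ, w => ∃ v, K.R w v ∧ mlSatW K φ v
  | .box φ, w => ∀ v, K.R w v → mlSatW K φ v

/-- Modal depth of an ML formula. -/
def mlMd : MLFormula Φ → ℕ
  | .atom _ => 0
  | .natom _ => 0
  | .and φ ψ => max (mlMd φ) (mlMd ψ)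
  | .or φ ψ => max (mlMd φ) (mlMd ψ)
  | .dia φ => mlMd φ + 1
  | .box φ => mlMd φ + 1

/-- `k`-bisimulation between pointed Kripke models. -/
def bisim (K K' : KripkeModel Φ) : ℕ → K.W → K'.W → Prop
  | 0, w, w' => ∀ p, w ∈ K.V p ↔ w' ∈ K'.V p
  | k + 1, w, w' => (∀ p, w ∈ K.V p ↔ w' ∈ K'.V p) ∧
      (∀ v, K.R w v → ∃ v', K'.R w' v' ∧ bisim K K' k v v') ∧
      (∀ v', K'.R w' v' → ∃ v, K.R w v ∧ bisim K K' k v v')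

/-- Team `k`-bisimilarity: domain and range totality. -/
def teamBisim (K K' : KripkeModel Φ) (k : ℕ) (T : Set K.W) (T' : Set K'.W) : Prop :=
  (∀ w ∈ T, ∃ w' ∈ T', bisim K K' k w w') ∧
  (∀ w' ∈ T', ∃ w ∈ T, bisim K K' k w w')

/-- Formulas of modal inclusion logic MINC. -/
inductive MINCFormula (Φ : Type) where
  | atom : Φ → MINCFormula Φ
  | natom : Φ → MINCFormula Φ
  | and : MINCFormula Φ → MINCFormula Φ → MINCFormula Φ
  | or : MINCFormula Φ → MINCFormula Φ → MINCFormula Φ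
  | dia : MINCFormula Φ → MINCFormula Φ
  | box : MINCFormula Φ → MINCFormula Φ
  | inc : List (MLFormula Φ) → List (MLFormula Φ) → MINCFormula Φ

/-- Team semantics for MINC. -/
def mincSat (K : KripkeModel Φ) : MINCFormula Φ → Set K.W → Prop
  | .atom p, T => T ⊆ K.V p
  | .natom p, T => T ∩ K.V p = ∅
  | .and φ ψ, T => mincSat K φ T ∧ mincSat K ψ T
  | .or φ ψ, T => ∃ T₁ T₂, T = T₁ ∪ T₂ ∧ mincSat K φ T₁ ∧ mincSat K ψ T₂
  | .dia φ, T => ∃ S, relStep K T S ∧ mincSat K φ S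
  | .box φ, T => mincSat K φ (img K T)
  | .inc φs ψs, T => ∀ w ∈ T, ∃ v ∈ T,
      ∀ pr ∈ φs.zip ψs, (mlSatW K pr.1 w ↔ mlSatW K pr.2 v)

/-- Modal depth of a MINC formula. -/
def mincMd : MINCFormula Φ → ℕ
  | .atom _ => 0
  | .natom _ => 0
  | .and φ ψ => max (mincMd φ) (mincMd ψ)
  | .or φ ψ => max (mincMd φ) (mincMd ψ)
  | .dia φ => mincMd φ + 1
  | .box φ => mincMd φ + 1
  | .inc φs ψs => ((φs ++ ψs).map mlMd).foldr max 0

/-- Formulas of ML(▽), modal logic with the nonemptiness operator. -/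
inductive NFormula (Φ : Type) where
  | atom : Φ → NFormula Φ
  | natom : Φ → NFormula Φ
  | and : NFormula Φ → NFormula Φ → NFormula Φ
  | or : NFormula Φ → NFormula Φ → NFormula Φ
  | dia : NFormula Φ → NFormula Φ
  | box : NFormula Φ → NFormula Φ
  | ne : NFormula Φ → NFormula Φ

/-- Team semantics for ML(▽). -/
def nSat (K : KripkeModel Φ) : NFormula Φ → Set K.W → Prop
  | .atom p, T => T ⊆ K.V p
  | .natom p, T => T ∩ K.V p = ∅
  | .and φ ψ, T => nSat K φ T ∧ nSat K ψ T
  | .or φ ψ, T => ∃ T₁ T₂, T = T₁ ∪ T₂ ∧ nSat K φ T₁ ∧ nSat K ψ T₂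
  | .dia φ, T => ∃ S, relStep K T S ∧ nSat K φ S
  | .box φ, T => nSat K φ (img K T)
  | .ne φ, T => T = ∅ ∨ ∃ S, S ⊆ T ∧ S.Nonempty ∧ nSat K φ S

/-- Modal depth of an ML(▽) formula. -/
def nMd : NFormula Φ → ℕ
  | .atom _ => 0
  | .natom _ => 0
  | .and φ ψ => max (nMd φ) (nMd ψ)
  | .or φ ψ => max (nMd φ) (nMd ψ)
  | .dia φ => nMd φ + 1
  | .box φ => nMd φ + 1
  | .ne φ => nMd φ

/-- Number of occurrences of ▽ in an ML(▽) formula. -/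
def nCount : NFormula Φ → ℕ
  | .atom _ => 0
  | .natom _ => 0
  | .and φ ψ => nCount φ + nCount ψ
  | .or φ ψ => nCount φ + nCount ψ
  | .dia φ => nCount φ
  | .box φ => nCount φ
  | .ne φ => nCount φ + 1

/-- Subformula occurrence at a position (path) in the syntax tree. -/
def subAt : NFormula Φ → List ℕ → Option (NFormula Φ)
  | φ, [] => some φ
  | .and θ _, 0 :: l => subAt θ l
  | .and _ η, 1 :: l => subAt η l
  | .or θ _, 0 :: l => subAt θ l
  | .or _ η, 1 :: l => subAt η l
  | .dia θ, 0 :: l => subAt θ l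
  | .box θ, 0 :: l => subAt θ l
  | .ne θ, 0 :: l => subAt θ l
  | _, _ => none

/-- `F` is a winning-strategy labeling of the syntax tree of `φ` for `(K,T)`. -/
def IsWinning (K : KripkeModel Φ) (φ : NFormula Φ) (T : Set K.W)
    (F : List ℕ → Set K.W) : Prop :=
  F [] = T ∧
  ∀ π ψ, subAt φ π = some ψ →
    match ψ with
    | .atom p => F π ⊆ K.V p
    | .natom p => F π ∩ K.V p = ∅
    | .and _ _ => F π = F (π ++ [0]) ∧ F π = F (π ++ [1])
    | .or _ _ => F π = F (π ++ [0]) ∪ F (π ++ [1])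
    | .dia _ => relStep K (F π) (F (π ++ [0]))
    | .box _ => F (π ++ [0]) = img K (F π)
    | .ne _ => F (π ++ [0]) ⊆ F π ∧ (F π ≠ ∅ → F (π ++ [0]) ≠ ∅)


/-- Forward image closure of team bisimulation. -/
theorem teamBisim_relStep (K K' : KripkeModel Φ) (k : ℕ) (T : Set K.W) (T' : Set K'.W)
    (h : teamBisim K K' (k + 1) T T') :
    ∀ S : Set K.W, relStep K T S →
      ∃ S' : Set K'.W, relStep K' T' S' ∧ teamBisim K K' k S S' := by
  intro S hS
  refine ⟨{v' | (∃ w' ∈ T', K'.R w' v') ∧ ∃ v ∈ S, bisim K K' k v v'}, ⟨?_, ?_⟩, ?_, ?_⟩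
  · rintro v' ⟨⟨w', hw', hR⟩, -⟩
    exact ⟨w', hw', hR⟩
  · intro w' hw'
    obtain ⟨w, hw, hb⟩ := h.2 w' hw'
    obtain ⟨v, hv, hR⟩ := hS.2 hw
    obtain ⟨v', hR', hb'⟩ := hb.2.1 v hR
    exact ⟨v', ⟨⟨w', hw', hR'⟩, v, hv, hb'⟩, hR'⟩
  · intro v hv
    obtain ⟨w, hw, hR⟩ := hS.1 hv
    obtain ⟨w', hw', hb⟩ := h.1 w hw
    obtain ⟨v', hR', hb'⟩ := hb.2.1 v hR
    exact ⟨v', ⟨⟨w', hw', hR'⟩, v, hv, hb'⟩, hb'⟩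
  · rintro v' ⟨-, v, hv, hb⟩
    exact ⟨v, hv, hb⟩

end TeamSem
end

section
/- Splitting preservation under team bisimulation: if K,T [⇄_{k+1}] K',T' and T = T₁ ∪ T₂ with T₁,T₂ ⊆ T, then there exist T'₁,T'₂ ⊆ T' with T' = T'₁ ∪ T'₂ such that K,T_i [⇄_{k+1}] K',T'_i for i ∈ {1,2}. -/
namespace TeamSem

variable {Φ : Type}

/-- Splitting preservation under team bisimulation. -/
theorem teamBisim_split (K K' : KripkeModel Φ) (k : ℕ) (T T₁ T₂ : Set K.W)
    (T' : Set K'.W) (h : teamBisim K K' (k + 1) T T')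
    (h₁ : T₁ ⊆ T) (h₂ : T₂ ⊆ T) (hT : T = T₁ ∪ T₂) :
    ∃ T₁' T₂' : Set K'.W, T₁' ⊆ T' ∧ T₂' ⊆ T' ∧ T' = T₁' ∪ T₂' ∧
      teamBisim K K' (k + 1) T₁ T₁' ∧ teamBisim K K' (k + 1) T₂ T₂' := by
  refine ⟨{w' ∈ T' | ∃ w ∈ T₁, bisim K K' (k+1) w w'},
          {w' ∈ T' | ∃ w ∈ T₂, bisim K K' (k+1) w w'},
          fun _ hx => hx.1, fun _ hx => hx.1, ?_, ?_, ?_⟩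
  · ext w'
    constructor
    · intro hw'
      obtain ⟨w, hw, hb⟩ := h.2 w' hw'
      rw [hT] at hw
      rcases hw with hw | hw
      · exact Or.inl ⟨hw', w, hw, hb⟩
      · exact Or.inr ⟨hw', w, hw, hb⟩
    · rintro (hx | hx) <;> exact hx.1
  · constructor
    · intro w hw
      obtain ⟨w', hw', hb⟩ := h.1 w (h₁ hw)
      exact ⟨w', ⟨hw', w, hw, hb⟩, hb⟩
    · rintro w' ⟨_, w, hw, hb⟩
      exact ⟨w, hw, hb⟩
  · constructor
    · intro w hw
      obtain ⟨w', hw', hb⟩ := h.1 w (h₂ hw)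
      exact ⟨w', ⟨hw', w, hw, hb⟩, hb⟩
    · rintro w' ⟨_, w, hw, hb⟩
      exact ⟨w, hw, hb⟩

end TeamSem
end

section
/- Hintikka formula characterization: for a finite set Φ of proposition symbols, k ∈ ℕ, and pointed Φ-models (K,w), (K',w'), the following are equivalent: (1) K,w and K',w' satisfy the same ML-formulas of modal depth ≤ k; (2) K,w ⇄_k K',w'; (3) K',w' ⊨ χ^k_{K,w}. -/
namespace TeamSem

variable {Φ : Type}

/-! Over finitely many atoms there are only finitely many `k`-bisimulation types,
defined by recursion on `k` as the atoms true at a world together with the set of types of its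
successors. The Hintikka formula of a type is a finite formula describing exactly that type, so a
world satisfies `χ^k_{K,w}` iff it has the type of `w`, i.e. iff it is `k`-bisimilar to `w`.
Bisimulation invariance closes the circle. -/

section Connectives

variable (p₀ : Φ)

-- The syntax has no constants, so `⊤` and `⊥` are built from an arbitrary atom `p₀`.
def mlTop : MLFormula Φ := .or (.atom p₀) (.natom p₀)

def mlBot : MLFormula Φ := .and (.atom p₀) (.natom p₀)

def mlConj (l : List (MLFormula Φ)) : MLFormula Φ := l.foldr .and (mlTop p₀)

def mlDisj (l : List (MLFormula Φ)) : MLFormula Φ := l.foldr .or (mlBot p₀)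

variable {p₀} {K : KripkeModel Φ} {w : K.W}

theorem mlSatW_mlConj {l : List (MLFormula Φ)} :
    mlSatW K (mlConj p₀ l) w ↔ ∀ φ ∈ l, mlSatW K φ w := by
  induction l with
  | nil => simpa [mlConj, mlTop, mlSatW] using em _
  | cons φ l ih => simp [mlConj, mlSatW, ← ih]

theorem mlSatW_mlDisj {l : List (MLFormula Φ)} :
    mlSatW K (mlDisj p₀ l) w ↔ ∃ φ ∈ l, mlSatW K φ w := by
  induction l with
  | nil => simp [mlDisj, mlBot, mlSatW]
  | cons φ l ih => simp [mlDisj, mlSatW, ← ih]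

theorem mlMd_mlConj_le {l : List (MLFormula Φ)} {n : ℕ} (h : ∀ φ ∈ l, mlMd φ ≤ n) :
    mlMd (mlConj p₀ l) ≤ n := by
  induction l with
  | nil => simp [mlConj, mlTop, mlMd]
  | cons φ l ih => simp_all [mlConj, mlMd]

theorem mlMd_mlDisj_le {l : List (MLFormula Φ)} {n : ℕ} (h : ∀ φ ∈ l, mlMd φ ≤ n) :
    mlMd (mlDisj p₀ l) ≤ n := by
  induction l with
  | nil => simp [mlDisj, mlBot, mlMd]
  | cons φ l ih => simp_all [mlDisj, mlMd]

end Connectives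

section Bisimulation

variable {K K' : KripkeModel Φ}

theorem bisim.atom_iff {k : ℕ} {w : K.W} {w' : K'.W} (h : bisim K K' k w w') (p : Φ) :
    w ∈ K.V p ↔ w' ∈ K'.V p := by
  cases k with
  | zero => exact h p
  | succ k => exact h.1 p

theorem mlSatW_iff_of_bisim (φ : MLFormula Φ) {k : ℕ} {w : K.W} {w' : K'.W}
    (h : bisim K K' k w w') (hφ : mlMd φ ≤ k) : mlSatW K φ w ↔ mlSatW K' φ w' := by
  induction φ generalizing k w w' with
  | atom p => exact h.atom_iff p
  | natom p => exact not_congr (h.atom_iff p)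
  | and φ ψ ihφ ihψ =>
    rw [mlMd, max_le_iff] at hφ
    exact and_congr (ihφ h hφ.1) (ihψ h hφ.2)
  | or φ ψ ihφ ihψ =>
    rw [mlMd, max_le_iff] at hφ
    exact or_congr (ihφ h hφ.1) (ihψ h hφ.2)
  | dia φ ih =>
    obtain ⟨j, rfl⟩ := Nat.exists_eq_add_one.mpr (Nat.lt_of_lt_of_le (Nat.succ_pos _) hφ)
    obtain ⟨-, forth, back⟩ := h
    replace hφ : mlMd φ ≤ j := Nat.le_of_succ_le_succ hφ
    constructor
    · rintro ⟨v, hv, hsat⟩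
      obtain ⟨v', hv', hvv'⟩ := forth v hv
      exact ⟨v', hv', (ih hvv' hφ).mp hsat⟩
    · rintro ⟨v', hv', hsat⟩
      obtain ⟨v, hv, hvv'⟩ := back v' hv'
      exact ⟨v, hv, (ih hvv' hφ).mpr hsat⟩
  | box φ ih =>
    obtain ⟨j, rfl⟩ := Nat.exists_eq_add_one.mpr (Nat.lt_of_lt_of_le (Nat.succ_pos _) hφ)
    obtain ⟨-, forth, back⟩ := h
    replace hφ : mlMd φ ≤ j := Nat.le_of_succ_le_succ hφ
    constructor
    · intro hsat v' hv'
      obtain ⟨v, hv, hvv'⟩ := back v' hv'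
      exact (ih hvv' hφ).mp (hsat v hv)
    · intro hsat v hv
      obtain ⟨v', hv', hvv'⟩ := forth v hv
      exact (ih hvv' hφ).mpr (hsat v' hv')

end Bisimulation

def HintikkaType (Φ : Type) : ℕ → Type
  | 0 => Set Φ
  | k + 1 => Set Φ × Set (HintikkaType Φ k)

instance HintikkaType.finite [Finite Φ] : ∀ k, Finite (HintikkaType Φ k)
  | 0 => inferInstanceAs (Finite (Set Φ))
  | k + 1 =>
    haveI := HintikkaType.finite k
    inferInstanceAs (Finite (Set Φ × Set (HintikkaType Φ k)))

def atomsAt (K : KripkeModel Φ) (w : K.W) : Set Φ := {p | w ∈ K.V p}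

def hintikkaType (K : KripkeModel Φ) : ∀ k, K.W → HintikkaType Φ k
  | 0, w => atomsAt K w
  | k + 1, w => (atomsAt K w, hintikkaType K k '' {v | K.R w v})

theorem image_eq_image_iff {α β γ : Type*} {f : α → γ} {g : β → γ} {s : Set α} {t : Set β} :
    f '' s = g '' t ↔ (∀ a ∈ s, ∃ b ∈ t, f a = g b) ∧ (∀ b ∈ t, ∃ a ∈ s, f a = g b) := by
  rw [Set.Subset.antisymm_iff, Set.image_subset_iff, Set.image_subset_iff]
  simp only [Set.subset_def, Set.mem_preimage, Set.mem_image, eq_comm (a := g _)]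

theorem hintikkaType_eq_iff_bisim {K K' : KripkeModel Φ} (k : ℕ) (w : K.W) (w' : K'.W) :
    hintikkaType K k w = hintikkaType K' k w' ↔ bisim K K' k w w' := by
  induction k generalizing w w' with
  | zero => exact Set.ext_iff
  | succ k ih =>
    have type_eq_iff : hintikkaType K (k + 1) w = hintikkaType K' (k + 1) w' ↔
        atomsAt K w = atomsAt K' w' ∧
          hintikkaType K k '' {v | K.R w v} = hintikkaType K' k '' {v | K'.R w' v} :=
      Prod.ext_iff
    rw [type_eq_iff, image_eq_image_iff]
    simp only [Set.mem_ofPred_eq, ih]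
    exact and_congr Set.ext_iff Iff.rfl

section HintikkaFormula

variable [Finite Φ] (p₀ : Φ)

noncomputable def atomsFormula (a : Set Φ) : MLFormula Φ :=
  mlConj p₀ (a.toFinite.toFinset.toList.map .atom ++ aᶜ.toFinite.toFinset.toList.map .natom)

noncomputable def hintikkaFormula : ∀ k, HintikkaType Φ k → MLFormula Φ
  | 0, a => atomsFormula p₀ a
  | k + 1, t => .and (atomsFormula p₀ t.1) (.and
      (mlConj p₀ (t.2.toFinite.toFinset.toList.map fun s => .dia (hintikkaFormula k s)))
      (.box (mlDisj p₀ (t.2.toFinite.toFinset.toList.map (hintikkaFormula k)))))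

variable {p₀}

theorem mlMd_atomsFormula (a : Set Φ) : mlMd (atomsFormula p₀ a) = 0 := by
  refine Nat.le_zero.mp (mlMd_mlConj_le ?_)
  simp only [List.mem_append, List.mem_map]
  rintro φ (⟨p, -, rfl⟩ | ⟨p, -, rfl⟩) <;> rfl

theorem mlSatW_atomsFormula {K : KripkeModel Φ} {w : K.W} {a : Set Φ} :
    mlSatW K (atomsFormula p₀ a) w ↔ atomsAt K w = a := by
  simp only [atomsFormula, mlSatW_mlConj, List.forall_mem_append, List.forall_mem_map,
    Finset.mem_toList, Set.Finite.mem_toFinset, Set.mem_compl_iff, mlSatW, Set.ext_iff, atomsAt,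
    Set.mem_ofPred_eq]
  exact ⟨fun ⟨pos, neg⟩ p => ⟨not_imp_not.mp (neg p), pos p⟩,
    fun h => ⟨fun p hp => (h p).mpr hp, fun p hp hw => hp ((h p).mp hw)⟩⟩

theorem mlMd_hintikkaFormula_le : ∀ k (t : HintikkaType Φ k), mlMd (hintikkaFormula p₀ k t) ≤ k
  | 0, a => (mlMd_atomsFormula a).le
  | k + 1, t => by
    simp only [hintikkaFormula, mlMd, mlMd_atomsFormula, max_le_iff]
    refine ⟨Nat.zero_le _, mlMd_mlConj_le ?_, Nat.succ_le_succ (mlMd_mlDisj_le ?_)⟩ <;>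
      simp only [List.forall_mem_map]
    · exact fun s _ => Nat.succ_le_succ (mlMd_hintikkaFormula_le k s)
    · exact fun s _ => mlMd_hintikkaFormula_le k s

theorem mlSatW_hintikkaFormula {K : KripkeModel Φ} :
    ∀ k (t : HintikkaType Φ k) (w : K.W),
      mlSatW K (hintikkaFormula p₀ k t) w ↔ hintikkaType K k w = t
  | 0, a, w => mlSatW_atomsFormula
  | k + 1, t, w => by
    have type_eq_iff : hintikkaType K (k + 1) w = t ↔
        atomsAt K w = t.1 ∧ hintikkaType K k '' {v | K.R w v} = t.2 :=
      Prod.ext_iff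
    rw [type_eq_iff, Set.Subset.antisymm_iff (a := hintikkaType K k '' _), Set.image_subset_iff]
    simp only [hintikkaFormula, mlSatW, mlSatW_atomsFormula, mlSatW_mlConj, mlSatW_mlDisj,
      List.mem_map, exists_exists_and_eq_and, forall_exists_index, and_imp,
      forall_apply_eq_imp_iff₂, Finset.mem_toList, Set.Finite.mem_toFinset,
      mlSatW_hintikkaFormula k, exists_eq_right', Set.subset_def, Set.mem_preimage, Set.mem_image,
      Set.mem_ofPred_eq]
    exact and_congr_right' and_comm

end HintikkaFormula

/-- Hintikka formula characterisation: `k`-equivalence, `k`-bisimilarity, and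
satisfaction of the `k`-th Hintikka formula of `(K,w)` are all equivalent. -/
theorem hintikka_characterisation [Fintype Φ] [Nonempty Φ] (k : ℕ)
    (K : KripkeModel Φ) (w : K.W) :
    ∃ χ : MLFormula Φ, mlMd χ ≤ k ∧
      ∀ (K' : KripkeModel Φ) (w' : K'.W),
        ((∀ φ : MLFormula Φ, mlMd φ ≤ k → (mlSatW K φ w ↔ mlSatW K' φ w')) ↔
            bisim K K' k w w') ∧
        (bisim K K' k w w' ↔ mlSatW K' χ w') := by
  obtain ⟨p₀⟩ := ‹Nonempty Φ›
  set χ := hintikkaFormula p₀ k (hintikkaType K k w)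
  have md_le : mlMd χ ≤ k := mlMd_hintikkaFormula_le k _
  refine ⟨χ, md_le, fun K' w' => ?_⟩
  have bisim_iff_sat : bisim K K' k w w' ↔ mlSatW K' χ w' := by
    rw [mlSatW_hintikkaFormula, eq_comm, hintikkaType_eq_iff_bisim]
  have sat_self : mlSatW K χ w := (mlSatW_hintikkaFormula k _ w).mpr rfl
  refine ⟨⟨fun equiv => ?_, fun h φ hφ => mlSatW_iff_of_bisim φ h hφ⟩, bisim_iff_sat⟩
  exact bisim_iff_sat.mpr ((equiv χ md_le).mp sat_self)

end TeamSem
end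

section
/- Closure under unions for modal inclusion logic: for every MINC-formula φ, Kripke model K, and family of teams (T_i)_{i∈I} with K,T_i ⊨ φ for all i, it holds that K, ⋃_{i∈I} T_i ⊨ φ. -/
namespace TeamSem

variable {Φ : Type}

lemma img_iUnion (K : KripkeModel Φ) {I : Type} (T : I → Set K.W) :
    img K (⋃ i, T i) = ⋃ i, img K (T i) := by
  ext v
  simp only [img, Set.mem_iUnion, Set.mem_setOf_eq]
  constructor
  · rintro ⟨w, ⟨i, hi⟩, hR⟩
    exact ⟨i, w, hi, hR⟩
  · rintro ⟨i, w, hw, hR⟩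
    exact ⟨w, ⟨i, hw⟩, hR⟩

lemma img_mono (K : KripkeModel Φ) {S T : Set K.W} (h : S ⊆ T) :
    img K S ⊆ img K T := by
  rintro v ⟨w, hw, hR⟩; exact ⟨w, h hw, hR⟩

lemma preimg_mono (K : KripkeModel Φ) {S T : Set K.W} (h : S ⊆ T) :
    preimg K S ⊆ preimg K T := by
  rintro w ⟨v, hv, hR⟩; exact ⟨v, h hv, hR⟩

/-- Closure under unions for modal inclusion logic. -/
theorem minc_union_closed (φ : MINCFormula Φ) (K : KripkeModel Φ) (I : Type)
    (T : I → Set K.W) (h : ∀ i, mincSat K φ (T i)) :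
    mincSat K φ (⋃ i, T i) := by
  induction φ generalizing T with
  | atom p =>
    exact Set.iUnion_subset fun i => h i
  | natom p =>
    simp only [mincSat] at h ⊢
    rw [Set.iUnion_inter]
    simp [h]
  | and φ ψ ihφ ihψ =>
    exact ⟨ihφ _ fun i => (h i).1, ihψ _ fun i => (h i).2⟩
  | or φ ψ ihφ ihψ =>
    choose T₁ T₂ hT hφ hψ using h
    refine ⟨⋃ i, T₁ i, ⋃ i, T₂ i, ?_, ihφ _ hφ, ihψ _ hψ⟩
    rw [← Set.iUnion_union_distrib]
    exact Set.iUnion_congr hT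
  | dia φ ih =>
    choose S hS hφ using h
    refine ⟨⋃ i, S i, ⟨?_, ?_⟩, ih _ hφ⟩
    · exact Set.iUnion_subset fun i =>
        (hS i).1.trans (img_mono K (Set.subset_iUnion T i))
    · exact Set.iUnion_subset fun i =>
        (hS i).2.trans (preimg_mono K (Set.subset_iUnion S i))
  | box φ ih =>
    show mincSat K φ (img K (⋃ i, T i))
    rw [img_iUnion]
    exact ih _ h
  | inc φs ψs =>
    intro w hw
    obtain ⟨i, hi⟩ := Set.mem_iUnion.mp hw
    obtain ⟨v, hv, hvs⟩ := h i w hi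
    exact ⟨v, Set.mem_iUnion.mpr ⟨i, hv⟩, hvs⟩

end TeamSem
end

section
/- Bisimulation invariance of ML(▽): every formula φ of modal logic with the nonemptiness operator ▽ is invariant under team k-bisimulation for k = md(φ): if K,T ⊨ φ and K,T [⇄_k] K',T', then K',T' ⊨ φ. -/
namespace TeamSem

variable {Φ : Type}

lemma bisim_of_le {K K' : KripkeModel Φ} : ∀ {j k : ℕ}, j ≤ k → ∀ {w w'},
    bisim K K' k w w' → bisim K K' j w w' := by
  intro j k
  induction k generalizing j with
  | zero => intro hle w w' hb; obtain rfl := Nat.le_zero.mp hle; exact hb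
  | succ k ih =>
    intro hle w w' hb
    match j with
    | 0 => exact hb.1
    | j + 1 =>
      refine ⟨hb.1, ?_, ?_⟩
      · intro v hv
        obtain ⟨v', hv', hbv⟩ := hb.2.1 v hv
        exact ⟨v', hv', ih (Nat.succ_le_succ_iff.mp hle) hbv⟩
      · intro v' hv'
        obtain ⟨v, hv, hbv⟩ := hb.2.2 v' hv'
        exact ⟨v, hv, ih (Nat.succ_le_succ_iff.mp hle) hbv⟩

lemma teamBisim_of_le {K K' : KripkeModel Φ} {j k : ℕ} (hle : j ≤ k)
    {T : Set K.W} {T' : Set K'.W} (hb : teamBisim K K' k T T') :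
    teamBisim K K' j T T' := by
  constructor
  · intro w hw; obtain ⟨w', hw', h⟩ := hb.1 w hw; exact ⟨w', hw', bisim_of_le hle h⟩
  · intro w' hw'; obtain ⟨w, hw, h⟩ := hb.2 w' hw'; exact ⟨w, hw, bisim_of_le hle h⟩

/-- Bisimulation invariance of ML(▽). -/
theorem mlne_bisim_invariant (φ : NFormula Φ) (K K' : KripkeModel Φ)
    (T : Set K.W) (T' : Set K'.W)
    (h : nSat K φ T) (hb : teamBisim K K' (nMd φ) T T') :
    nSat K' φ T' := by
  induction φ generalizing T T' with
  | atom p =>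
    intro w' hw'
    obtain ⟨w, hw, hbw⟩ := hb.2 w' hw'
    exact (hbw p).mp (h hw)
  | natom p =>
    ext w'
    simp only [Set.mem_inter_iff, Set.mem_empty_iff_false, iff_false, not_and]
    intro hw' hv'
    obtain ⟨w, hw, hbw⟩ := hb.2 w' hw'
    have h' : T ∩ K.V p = ∅ := h
    have : w ∈ T ∩ K.V p := ⟨hw, (hbw p).mpr hv'⟩
    simp [h'] at this
  | and φ ψ ihφ ihψ =>
    exact ⟨ihφ _ _ h.1 (teamBisim_of_le (le_max_left _ _) hb),
           ihψ _ _ h.2 (teamBisim_of_le (le_max_right _ _) hb)⟩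
  | or φ ψ ihφ ihψ =>
    obtain ⟨T₁, T₂, rfl, h₁, h₂⟩ := h
    set k := nMd (NFormula.or φ ψ) with hk
    refine ⟨{w' ∈ T' | ∃ w ∈ T₁, bisim K K' k w w'},
            {w' ∈ T' | ∃ w ∈ T₂, bisim K K' k w w'}, ?_, ?_, ?_⟩
    · ext w'
      simp only [Set.mem_union, Set.mem_setOf_eq]
      constructor
      · intro hw'
        obtain ⟨w, hw, hbw⟩ := hb.2 w' hw'
        cases hw with
        | inl h1 => exact Or.inl ⟨hw', w, h1, hbw⟩
        | inr h2 => exact Or.inr ⟨hw', w, h2, hbw⟩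
      · rintro (⟨hw', _⟩ | ⟨hw', _⟩) <;> exact hw'
    · refine ihφ _ _ h₁ (teamBisim_of_le (k := k) (le_max_left _ _) ⟨?_, ?_⟩)
      · intro w hw
        obtain ⟨w', hw', hbw⟩ := hb.1 w (Or.inl hw)
        exact ⟨w', ⟨hw', w, hw, hbw⟩, hbw⟩
      · rintro w' ⟨hw', w, hw, hbw⟩; exact ⟨w, hw, hbw⟩
    · refine ihψ _ _ h₂ (teamBisim_of_le (k := k) (le_max_right _ _) ⟨?_, ?_⟩)
      · intro w hw
        obtain ⟨w', hw', hbw⟩ := hb.1 w (Or.inr hw)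
        exact ⟨w', ⟨hw', w, hw, hbw⟩, hbw⟩
      · rintro w' ⟨hw', w, hw, hbw⟩; exact ⟨w, hw, hbw⟩
  | dia φ ihφ =>
    obtain ⟨S, ⟨hS1, hS2⟩, hSφ⟩ := h
    set k := nMd φ with hk
    refine ⟨{v' | (∃ w' ∈ T', K'.R w' v') ∧ ∃ v ∈ S, bisim K K' k v v'}, ⟨?_, ?_⟩, ?_⟩
    · rintro v' ⟨⟨w', hw', hr⟩, _⟩; exact ⟨w', hw', hr⟩
    · intro w' hw'
      obtain ⟨w, hw, hbw⟩ := hb.2 w' hw'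
      obtain ⟨v, hv, hr⟩ := hS2 hw
      obtain ⟨v', hr', hbv⟩ := hbw.2.1 v hr
      exact ⟨v', ⟨⟨w', hw', hr'⟩, v, hv, hbv⟩, hr'⟩
    · refine ihφ _ _ hSφ ⟨?_, ?_⟩
      · intro v hv
        obtain ⟨w, hw, hr⟩ := hS1 hv
        obtain ⟨w', hw', hbw⟩ := hb.1 w hw
        obtain ⟨v', hr', hbv⟩ := hbw.2.1 v hr
        exact ⟨v', ⟨⟨w', hw', hr'⟩, v, hv, hbv⟩, hbv⟩
      · rintro v' ⟨_, v, hv, hbv⟩; exact ⟨v, hv, hbv⟩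
  | box φ ihφ =>
    refine ihφ _ _ h ⟨?_, ?_⟩
    · rintro v ⟨w, hw, hr⟩
      obtain ⟨w', hw', hbw⟩ := hb.1 w hw
      obtain ⟨v', hr', hbv⟩ := hbw.2.1 v hr
      exact ⟨v', ⟨w', hw', hr'⟩, hbv⟩
    · rintro v' ⟨w', hw', hr'⟩
      obtain ⟨w, hw, hbw⟩ := hb.2 w' hw'
      obtain ⟨v, hr, hbv⟩ := hbw.2.2 v' hr'
      exact ⟨v, ⟨w, hw, hr⟩, hbv⟩
  | ne φ ihφ =>
    cases h with
    | inl hT =>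
      left
      ext w'
      simp only [Set.mem_empty_iff_false, iff_false]
      intro hw'
      obtain ⟨w, hw, _⟩ := hb.2 w' hw'
      simp [hT] at hw
    | inr h =>
      obtain ⟨S, hST, ⟨w₀, hw₀⟩, hSφ⟩ := h
      right
      set k := nMd φ with hk
      refine ⟨{w' ∈ T' | ∃ w ∈ S, bisim K K' k w w'}, fun w' hw' => hw'.1, ?_, ?_⟩
      · obtain ⟨w', hw', hbw⟩ := hb.1 w₀ (hST hw₀)
        exact ⟨w', hw', w₀, hw₀, hbw⟩
      · refine ihφ _ _ hSφ ⟨?_, ?_⟩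
        · intro w hw
          obtain ⟨w', hw', hbw⟩ := hb.1 w (hST hw)
          exact ⟨w', ⟨hw', w, hw, hbw⟩, hbw⟩
        · rintro w' ⟨hw', w, hw, hbw⟩; exact ⟨w, hw, hbw⟩

end TeamSem
end

section
/- Winning strategy characterization for ML(▽): given a Kripke model K=(W,R,V), a team T, and an ML(▽)-formula φ, there exists a labeling F of the nodes of the syntax tree of φ by teams satisfying (i) F(φ)=T; (ii) K,F(ℓ) ⊨ ℓ for each literal node ℓ; (iii) F(ψ)=F(θ)=F(η) for ψ = θ∧η; (iv) F(ψ)=F(θ)∪F(η) for ψ = θ∨η; (v) F(θ) ⊆ F(ψ) and (F(ψ)≠∅ → F(θ)≠∅) for ψ = ▽θ; (vi) F(ψ)[R]F(θ) for ψ = ◇θ; (vii) F(θ)=R[F(ψ)] for ψ = □θ — if and only if K,T ⊨ φ. -/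
namespace TeamSem

variable {Φ : Type}

lemma nSat_empty (K : KripkeModel Φ) (φ : NFormula Φ) : nSat K φ (∅ : Set K.W) := by
  induction φ with
  | atom p => simp [nSat]
  | natom p => simp [nSat]
  | and θ η ihθ ihη => exact ⟨ihθ, ihη⟩
  | or θ η ihθ ihη => exact ⟨∅, ∅, by simp, ihθ, ihη⟩
  | dia θ ih =>
      refine ⟨∅, ⟨?_, ?_⟩, ih⟩ <;> exact Set.empty_subset _
  | box θ ih =>
      have h : img K (∅ : Set K.W) = ∅ := by
        ext v; simp [img]
      show nSat K θ (img K ∅)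
      rw [h]; exact ih
  | ne θ ih => exact Or.inl rfl

lemma winning_child {K : KripkeModel Φ} {φ θ : NFormula Φ} (i : ℕ)
    (hchild : ∀ l, subAt φ (i :: l) = subAt θ l)
    {T : Set K.W} {F : List ℕ → Set K.W} (hF : IsWinning K φ T F) :
    IsWinning K θ (F [i]) (fun l => F (i :: l)) := by
  refine ⟨rfl, ?_⟩
  intro π ψ h
  exact hF.2 (i :: π) ψ (by rw [hchild]; exact h)

/-- grafting two labelings below a root labeled `T`. -/
def graft {W : Type} (T : Set W) (F0 F1 : List ℕ → Set W) : List ℕ → Set W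
  | [] => T
  | 0 :: l => F0 l
  | 1 :: l => F1 l
  | _ :: _ => ∅

lemma sat_to_winning (K : KripkeModel Φ) (φ : NFormula Φ) (T : Set K.W)
    (h : nSat K φ T) : ∃ F, IsWinning K φ T F := by
  induction φ generalizing T with
  | atom p =>
      refine ⟨fun _ => T, rfl, ?_⟩
      intro π ψ hψ
      cases π with
      | nil => cases hψ; exact h
      | cons i l => simp [subAt] at hψ
  | natom p =>
      refine ⟨fun _ => T, rfl, ?_⟩
      intro π ψ hψ
      cases π with
      | nil => cases hψ; exact h
      | cons i l => simp [subAt] at hψ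
  | and θ η ihθ ihη =>
      obtain ⟨F0, hF0⟩ := ihθ T h.1
      obtain ⟨F1, hF1⟩ := ihη T h.2
      refine ⟨graft T F0 F1, rfl, ?_⟩
      intro π ψ hψ
      match π with
      | [] =>
          cases hψ
          exact ⟨by simp [graft, hF0.1], by simp [graft, hF1.1]⟩
      | 0 :: l => exact hF0.2 l ψ hψ
      | 1 :: l => exact hF1.2 l ψ hψ
      | (n+2) :: l => simp [subAt] at hψ
  | or θ η ihθ ihη =>
      obtain ⟨T1, T2, hT, h1, h2⟩ := h
      obtain ⟨F0, hF0⟩ := ihθ T1 h1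
      obtain ⟨F1, hF1⟩ := ihη T2 h2
      refine ⟨graft T F0 F1, rfl, ?_⟩
      intro π ψ hψ
      match π with
      | [] =>
          cases hψ
          simp only [List.nil_append]
          show T = F0 [] ∪ F1 []
          rw [hF0.1, hF1.1]; exact hT
      | 0 :: l => exact hF0.2 l ψ hψ
      | 1 :: l => exact hF1.2 l ψ hψ
      | (n+2) :: l => simp [subAt] at hψ
  | dia θ ihθ =>
      obtain ⟨S, hrel, hS⟩ := h
      obtain ⟨F0, hF0⟩ := ihθ S hS
      refine ⟨graft T F0 F0, rfl, ?_⟩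
      intro π ψ hψ
      match π with
      | [] =>
          cases hψ
          simp only [List.nil_append]
          show relStep K T (F0 [])
          rw [hF0.1]; exact hrel
      | 0 :: l => exact hF0.2 l ψ hψ
      | 1 :: l => simp [subAt] at hψ
      | (n+2) :: l => simp [subAt] at hψ
  | box θ ihθ =>
      obtain ⟨F0, hF0⟩ := ihθ (img K T) h
      refine ⟨graft T F0 F0, rfl, ?_⟩
      intro π ψ hψ
      match π with
      | [] =>
          cases hψ
          show graft T F0 F0 [0] = img K T
          simp only [graft]
          exact hF0.1
      | 0 :: l => exact hF0.2 l ψ hψ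
      | 1 :: l => simp [subAt] at hψ
      | (n+2) :: l => simp [subAt] at hψ
  | ne θ ihθ =>
      obtain ⟨S, hST, hSne, hS⟩ :
          ∃ S, S ⊆ T ∧ (T ≠ ∅ → S ≠ ∅) ∧ nSat K θ S := by
        rcases h with h | ⟨S, hST, hSne, hS⟩
        · exact ⟨∅, by simp [h], fun hne => absurd h hne, nSat_empty K θ⟩
        · exact ⟨S, hST, fun _ => Set.nonempty_iff_ne_empty.mp hSne, hS⟩
      obtain ⟨F0, hF0⟩ := ihθ S hS
      refine ⟨graft T F0 F0, rfl, ?_⟩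
      intro π ψ hψ
      match π with
      | [] =>
          cases hψ
          simp only [List.nil_append]
          refine ⟨?_, ?_⟩
          · show F0 [] ⊆ T
            rw [hF0.1]; exact hST
          · show T ≠ ∅ → F0 [] ≠ ∅
            rw [hF0.1]; exact hSne
      | 0 :: l => exact hF0.2 l ψ hψ
      | 1 :: l => simp [subAt] at hψ
      | (n+2) :: l => simp [subAt] at hψ

lemma winning_to_sat (K : KripkeModel Φ) (φ : NFormula Φ) :
    ∀ (T : Set K.W) (F : List ℕ → Set K.W), IsWinning K φ T F → nSat K φ T := by
  induction φ with
  | atom p =>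
      intro T F hF
      have h := hF.2 [] _ rfl
      rw [hF.1] at h; exact h
  | natom p =>
      intro T F hF
      have h := hF.2 [] _ rfl
      rw [hF.1] at h; exact h
  | and θ η ihθ ihη =>
      intro T F hF
      have hr := hF.2 [] _ rfl
      have h0 := ihθ _ _ (winning_child 0 (fun l => rfl) hF)
      have h1 := ihη _ _ (winning_child 1 (fun l => rfl) hF)
      rw [hF.1] at hr
      exact ⟨by rw [hr.1]; exact h0, by rw [hr.2]; exact h1⟩
  | or θ η ihθ ihη =>
      intro T F hF
      have hr := hF.2 [] _ rfl
      have h0 := ihθ _ _ (winning_child 0 (fun l => rfl) hF)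
      have h1 := ihη _ _ (winning_child 1 (fun l => rfl) hF)
      rw [hF.1] at hr
      exact ⟨F [0], F [1], hr, h0, h1⟩
  | dia θ ihθ =>
      intro T F hF
      have hr := hF.2 [] _ rfl
      have h0 := ihθ _ _ (winning_child 0 (fun l => rfl) hF)
      rw [hF.1] at hr
      exact ⟨F [0], hr, h0⟩
  | box θ ihθ =>
      intro T F hF
      have hr := hF.2 [] _ rfl
      have h0 := ihθ _ _ (winning_child 0 (fun l => rfl) hF)
      rw [hF.1] at hr
      show nSat K θ (img K T)
      rw [← hr]; exact h0
  | ne θ ihθ =>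
      intro T F hF
      have hr := hF.2 [] _ rfl
      have h0 := ihθ _ _ (winning_child 0 (fun l => rfl) hF)
      rw [hF.1] at hr
      by_cases hT : T = ∅
      · exact Or.inl hT
      · exact Or.inr ⟨F [0], hr.1, Set.nonempty_iff_ne_empty.mpr (hr.2 hT), h0⟩

/-- Winning strategy characterisation for ML(▽): a winning-strategy labeling of the
syntax tree of `φ` exists iff `K,T ⊨ φ`. -/
theorem winning_strategy_iff_sat (K : KripkeModel Φ) (T : Set K.W) (φ : NFormula Φ) :
    (∃ F : List ℕ → Set K.W, IsWinning K φ T F) ↔ nSat K φ T :=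
  ⟨fun ⟨F, hF⟩ => winning_to_sat K φ T F hF, sat_to_winning K φ T⟩

end TeamSem
end

section
/- Exponential lower bound: any formula φ of ML(▽) defining the class of pairs (K,T) satisfying the n-ary inclusion atom p₁…p_n ⊆ q₁…q_n contains at least 2ⁿ occurrences of the operator ▽. -/
namespace TeamSem

variable {Φ : Type}

/-! ### Auxiliary material for the lower bound -/

lemma NFormula.nonempty_of_formula : ∀ _ : NFormula Φ, Nonempty Φ := by
  intro φ
  induction φ with
  | atom p => exact ⟨p⟩
  | natom p => exact ⟨p⟩
  | and _ _ ih _ => exact ih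
  | or _ _ ih _ => exact ih
  | dia _ ih => exact ih
  | box _ ih => exact ih
  | ne _ ih => exact ih

lemma img_eq_self (K : KripkeModel Φ) (hR : ∀ a b, K.R a b ↔ a = b) (T : Set K.W) :
    img K T = T := by
  ext v
  constructor
  · rintro ⟨w, hw, hr⟩
    rwa [← (hR w v).mp hr]
  · intro hv
    exact ⟨v, hv, (hR v v).mpr rfl⟩

lemma preimg_eq_self (K : KripkeModel Φ) (hR : ∀ a b, K.R a b ↔ a = b) (S : Set K.W) :
    preimg K S = S := by
  ext w
  constructor
  · rintro ⟨v, hv, hr⟩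
    rwa [(hR w v).mp hr]
  · intro hw
    exact ⟨w, hw, (hR w w).mpr rfl⟩

lemma relStep_iff (K : KripkeModel Φ) (hR : ∀ a b, K.R a b ↔ a = b) (T S : Set K.W) :
    relStep K T S ↔ S = T := by
  unfold relStep
  rw [img_eq_self K hR, preimg_eq_self K hR]
  constructor
  · rintro ⟨h1, h2⟩
    exact h1.antisymm h2
  · rintro rfl
    exact ⟨le_rfl, le_rfl⟩

/-- Over a model with identity accessibility relation, any team satisfying an ML(▽)
formula `ψ` has a finite "core" of at most `nCount ψ` elements such that every team
between the core and the original team still satisfies `ψ`. -/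
lemma core_exists (K : KripkeModel Φ) (hR : ∀ a b, K.R a b ↔ a = b) :
    ∀ (ψ : NFormula Φ) (T : Set K.W), nSat K ψ T →
      ∃ D : Set K.W, D ⊆ T ∧ D.Finite ∧ D.ncard ≤ nCount ψ ∧
        ∀ S, D ⊆ S → S ⊆ T → nSat K ψ S := by
  intro ψ
  induction ψ with
  | atom p =>
    intro T hT
    simp only [nSat] at hT
    exact ⟨∅, Set.empty_subset _, Set.finite_empty, by simp,
      fun S _ hST => hST.trans hT⟩
  | natom p =>
    intro T hT
    simp only [nSat] at hT
    refine ⟨∅, Set.empty_subset _, Set.finite_empty, by simp, fun S _ hST => ?_⟩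
    simp only [nSat]
    have hsub : S ∩ K.V p ⊆ T ∩ K.V p := Set.inter_subset_inter_left _ hST
    rw [hT] at hsub
    exact Set.subset_empty_iff.mp hsub
  | and φ ψ ih1 ih2 =>
    intro T hT
    simp only [nSat] at hT
    obtain ⟨h1, h2⟩ := hT
    obtain ⟨D1, hD1T, hf1, hc1, hs1⟩ := ih1 T h1
    obtain ⟨D2, hD2T, hf2, hc2, hs2⟩ := ih2 T h2
    refine ⟨D1 ∪ D2, Set.union_subset hD1T hD2T, hf1.union hf2, ?_, fun S hDS hST => ?_⟩
    · calc (D1 ∪ D2).ncard ≤ D1.ncard + D2.ncard := Set.ncard_union_le _ _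
        _ ≤ nCount φ + nCount ψ := Nat.add_le_add hc1 hc2
    · exact ⟨hs1 S (Set.subset_union_left.trans hDS) hST,
        hs2 S (Set.subset_union_right.trans hDS) hST⟩
  | or φ ψ ih1 ih2 =>
    intro T hT
    simp only [nSat] at hT
    obtain ⟨T1, T2, rfl, h1, h2⟩ := hT
    obtain ⟨D1, hD1T, hf1, hc1, hs1⟩ := ih1 T1 h1
    obtain ⟨D2, hD2T, hf2, hc2, hs2⟩ := ih2 T2 h2
    refine ⟨D1 ∪ D2, Set.union_subset (hD1T.trans Set.subset_union_left)
      (hD2T.trans Set.subset_union_right), hf1.union hf2, ?_, fun S hDS hST => ?_⟩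
    · calc (D1 ∪ D2).ncard ≤ D1.ncard + D2.ncard := Set.ncard_union_le _ _
        _ ≤ nCount φ + nCount ψ := Nat.add_le_add hc1 hc2
    · simp only [nSat]
      refine ⟨(S ∩ T1) ∪ D1, (S ∩ T2) ∪ D2, ?_, ?_, ?_⟩
      · apply Set.Subset.antisymm
        · intro x hx
          rcases hST hx with h | h
          · exact Or.inl (Or.inl ⟨hx, h⟩)
          · exact Or.inr (Or.inl ⟨hx, h⟩)
        · intro x hx
          rcases hx with (⟨h, _⟩ | h) | (⟨h, _⟩ | h)
          · exact h
          · exact hDS (Or.inl h)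
          · exact h
          · exact hDS (Or.inr h)
      · exact hs1 _ Set.subset_union_right
          (Set.union_subset Set.inter_subset_right hD1T)
      · exact hs2 _ Set.subset_union_right
          (Set.union_subset Set.inter_subset_right hD2T)
  | dia φ ih =>
    intro T hT
    simp only [nSat] at hT
    obtain ⟨S0, hrel, hS0⟩ := hT
    rw [relStep_iff K hR] at hrel
    subst hrel
    obtain ⟨D, hDT, hf, hc, hs⟩ := ih S0 hS0
    refine ⟨D, hDT, hf, hc, fun S hDS hST => ?_⟩
    simp only [nSat]
    exact ⟨S, (relStep_iff K hR _ _).mpr rfl, hs S hDS hST⟩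
  | box φ ih =>
    intro T hT
    simp only [nSat] at hT
    rw [img_eq_self K hR] at hT
    obtain ⟨D, hDT, hf, hc, hs⟩ := ih T hT
    refine ⟨D, hDT, hf, hc, fun S hDS hST => ?_⟩
    simp only [nSat]
    rw [img_eq_self K hR]
    exact hs S hDS hST
  | ne φ ih =>
    intro T hT
    simp only [nSat] at hT
    rcases hT with rfl | ⟨S0, hS0T, ⟨t, ht⟩, hS0⟩
    · refine ⟨∅, Set.empty_subset _, Set.finite_empty, by simp, fun S _ hST => ?_⟩
      simp only [nSat]
      exact Or.inl (Set.subset_empty_iff.mp hST)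
    · obtain ⟨D0, hD0, hf0, hc0, hs0⟩ := ih S0 hS0
      refine ⟨insert t D0, Set.insert_subset (hS0T ht) (hD0.trans hS0T), hf0.insert t, ?_,
        fun S hDS hST => ?_⟩
      · calc (insert t D0).ncard ≤ D0.ncard + 1 := Set.ncard_insert_le _ _
          _ ≤ nCount φ + 1 := Nat.add_le_add_right hc0 1
      · simp only [nSat]
        refine Or.inr ⟨S ∩ S0, Set.inter_subset_left,
          ⟨t, Set.mem_inter (hDS (Set.mem_insert t D0)) ht⟩, ?_⟩
        exact hs0 _ (Set.subset_inter
          (fun x hx => hDS (Set.mem_insert_of_mem _ hx)) hD0) Set.inter_subset_right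

/-- The counterexample model: worlds are pairs over `ZMod (2^n)`, the accessibility
relation is equality, and the bits of the two coordinates give the valuations. -/
def iKM (n : ℕ) : KripkeModel (Fin n ⊕ Fin n) where
  W := ZMod (2 ^ n) × ZMod (2 ^ n)
  R := Eq
  V x := match x with
    | Sum.inl i => {w | (ZMod.val w.1).testBit i.val = true}
    | Sum.inr i => {w | (ZMod.val w.2).testBit i.val = true}

/-- The cyclic team `{(a, a+1) : a ∈ ZMod (2^n)}`. -/
def iTeam (n : ℕ) : Set (iKM n).W := Set.range (fun a : ZMod (2 ^ n) => (a, a + 1))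

lemma iKM_bit_inj (n : ℕ) [NeZero (2 ^ n)] (a b : ZMod (2 ^ n))
    (hab : ∀ i : Fin n, (ZMod.val a).testBit i.val = (ZMod.val b).testBit i.val) :
    a = b := by
  apply ZMod.val_injective
  apply Nat.eq_of_testBit_eq
  intro i
  by_cases hi : i < n
  · exact hab ⟨i, hi⟩
  · rw [Nat.testBit_lt_two_pow, Nat.testBit_lt_two_pow]
    · exact lt_of_lt_of_le (ZMod.val_lt b) (Nat.pow_le_pow_right (by norm_num) (le_of_not_gt hi))
    · exact lt_of_lt_of_le (ZMod.val_lt a) (Nat.pow_le_pow_right (by norm_num) (le_of_not_gt hi))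

/-- Exponential lower bound: any ML(▽) formula defining the `n`-ary inclusion atom
`p₁…p_n ⊆ q₁…q_n` (with `p i = Sum.inl i` and `q i = Sum.inr i`) contains at least
`2 ^ n` occurrences of ▽. -/
theorem mlne_inclusion_lower_bound (n : ℕ) (φ : NFormula (Fin n ⊕ Fin n))
    (h : ∀ (K : KripkeModel (Fin n ⊕ Fin n)) (T : Set K.W),
      nSat K φ T ↔ ∀ w ∈ T, ∃ v ∈ T, ∀ i : Fin n,
        (w ∈ K.V (Sum.inl i) ↔ v ∈ K.V (Sum.inr i))) :
    2 ^ n ≤ nCount φ := by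
  rcases Nat.eq_zero_or_pos n with rfl | hn
  · obtain ⟨x⟩ := NFormula.nonempty_of_formula φ
    rcases x with i | i <;> exact i.elim0
  haveI : NeZero (2 ^ n) := ⟨(Nat.two_pow_pos n).ne'⟩
  haveI : Fact (1 < 2 ^ n) := ⟨Nat.one_lt_two_pow_iff.mpr hn.ne'⟩
  set K := iKM n with hK
  have hR : ∀ a b : K.W, K.R a b ↔ a = b := fun a b => Iff.rfl
  set T := iTeam n with hT
  -- `T` satisfies the inclusion atom
  have hsatT : nSat K φ T := by
    rw [h K T]
    rintro w ⟨a, rfl⟩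
    refine ⟨(a - 1, a), ⟨a - 1, by show (a - 1, a - 1 + 1) = (a - 1, a); rw [sub_add_cancel]⟩, fun i => Iff.rfl⟩
  obtain ⟨D, hDT, hfin, hcard, hs⟩ := core_exists K hR φ T hsatT
  by_cases hTD : T ⊆ D
  · -- then `D` already has `2^n` elements
    have hinj : Function.Injective (fun a : ZMod (2 ^ n) => ((a, a + 1) : K.W)) := by
      intro a b hab
      exact congrArg Prod.fst hab
    have hTcard : T.ncard = 2 ^ n := by
      calc T.ncard = Nat.card T := (Nat.card_coe_set_eq T).symm
        _ = Nat.card (ZMod (2 ^ n)) := Nat.card_range_of_injective hinj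
        _ = 2 ^ n := by rw [Nat.card_eq_fintype_card, ZMod.card]
    calc 2 ^ n = T.ncard := hTcard.symm
      _ ≤ D.ncard := Set.ncard_le_ncard hTD hfin
      _ ≤ nCount φ := hcard
  · -- otherwise remove an element of `T \ D` and obtain a contradiction
    exfalso
    obtain ⟨t, htT, htD⟩ := Set.not_subset.mp hTD
    have hsatS : nSat K φ (T \ {t}) :=
      hs _ (Set.subset_diff_singleton hDT htD) Set.diff_subset
    rw [h K] at hsatS
    obtain ⟨a0, ha0⟩ := htT
    have step : ∀ a : ZMod (2 ^ n), (a, a + 1) ∈ T \ {t} → (a - 1, a) ∈ T \ {t} := by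
      intro a ha
      obtain ⟨v, hv, hiff⟩ := hsatS _ ha
      obtain ⟨hvT, hvt⟩ := hv
      obtain ⟨c, hc⟩ := hvT
      simp only at hc
      subst hc
      have hbits : ∀ i : Fin n,
          (ZMod.val a).testBit i.val = (ZMod.val (c + 1)).testBit i.val := by
        intro i
        exact Bool.eq_iff_iff.mpr (hiff i)
      have hac : a = c + 1 := iKM_bit_inj n a (c + 1) hbits
      have hc1 : a - 1 = c := by rw [hac, add_sub_cancel_right]
      rw [hc1, hac]
      exact ⟨⟨c, rfl⟩, hvt⟩
    have chain : ∀ k : ℕ, (a0 + (k : ZMod (2 ^ n)), a0 + (k : ZMod (2 ^ n)) + 1) ∉ T \ {t} := by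
      intro k
      induction k with
      | zero =>
        intro hmem
        apply hmem.2
        have : a0 + ((0 : ℕ) : ZMod (2 ^ n)) = a0 := by push_cast; ring
        rw [this]
        exact ha0
      | succ k ihk =>
        intro hmem
        apply ihk
        have h2 := step _ hmem
        have e1 : a0 + ((k + 1 : ℕ) : ZMod (2 ^ n)) - 1 = a0 + (k : ZMod (2 ^ n)) := by
          push_cast; ring
        have e2 : a0 + ((k + 1 : ℕ) : ZMod (2 ^ n)) = a0 + (k : ZMod (2 ^ n)) + 1 := by
          push_cast; ring
        rwa [e1, e2] at h2
    apply chain 1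
    constructor
    · exact ⟨a0 + ((1 : ℕ) : ZMod (2 ^ n)), rfl⟩
    · intro hmem
      have heq : (a0 + ((1 : ℕ) : ZMod (2 ^ n)), a0 + ((1 : ℕ) : ZMod (2 ^ n)) + 1) = t :=
        hmem
      rw [← ha0] at heq
      have h1 : a0 + ((1 : ℕ) : ZMod (2 ^ n)) = a0 + 0 := by
        rw [add_zero]
        exact congrArg Prod.fst heq
      have h10 := add_left_cancel h1
      push_cast at h10
      exact one_ne_zero h10

end TeamSem
end
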